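/- Fix T ≥ 1, N ≥ 1, and K ≥ 1. Let y_t ∈ {0,1}, p_t ∈ [0,1], p^F_t ∈ [0,1], and expert predictions p^{(k)}_t ∈ [0,1] for t = 1,...,T and k = 1,...,K, and let ι : {1,...,T} → {0,...,N−1} satisfy p^F_t ∈ [ι(t)/N, (ι(t)+1)/N] for all t. Define T_i and per-bucket regrets R_i as: T_i := #{t : ι(t) = i} and R_i := (1/T_i) ∑_{t : ι(t)=i} ((y_t − p_t)^2 − (y_t − i/N)^2) when T_i > 0 (else 0). Suppose there is R_ext ≥ 0 such that for every k, (1/T) ∑_{t=1}^T (y_t − p^F_t)^2 ≤ (1/T) ∑_{t=1}^T (y_t − p^{(k)}_t)^2 + R_ext. Then for every k ∈ {1,...,K}: (1/T) ∑_{t=1}^T (y_t − p_t)^2 ≤ (1/T) ∑_{t=1}^T (y_t − p^{(k)}_t)^2 + R_ext + ∑_{i=0}^{N−1} (T_i/T)·R_i + 2/N. -/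

import Mathlib

open Finset

/-! The recalibrated loss splits, round by round, into the bucket regret against the grid point
`ι t / N` plus the loss of that grid point. Since `pF t` lies within `1/N` above `ι t / N`, the grid
point loses at most `2/N` more than the aggregate forecast, which in turn is within `Rext` of
every expert. -/

/-- The difference of the losses is `(a - b) (2y - a - b)`, with `0 ≤ a - b ≤ δ` and
`2y - a - b ≤ 2`. -/
lemma sq_sub_le_sq_sub_add_two_mul {y a b δ : ℝ} (hy : y ≤ 1) (hb : 0 ≤ b) (hba : b ≤ a)
    (haδ : a ≤ b + δ) : (y - b) ^ 2 ≤ (y - a) ^ 2 + 2 * δ := by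
  nlinarith [mul_le_mul_of_nonneg_left (by linarith : 2 * y - a - b ≤ 2) (sub_nonneg.2 hba)]

lemma average_le_average_add {T : ℕ} {f g : Fin T → ℝ} {c : ℝ} (hc : 0 ≤ c)
    (hfg : ∀ t, f t ≤ g t + c) :
    (1 / (T : ℝ)) * ∑ t, f t ≤ (1 / (T : ℝ)) * ∑ t, g t + c := by
  have hsum : ∑ t, f t ≤ ∑ t, g t + T * c := by
    simpa [sum_add_distrib] using sum_le_sum fun t (_ : t ∈ univ) => hfg t
  have hscale : (1 / (T : ℝ)) * (T * c) ≤ c := by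
    rcases T.eq_zero_or_pos with rfl | hT
    · simpa using hc
    · rw [← mul_assoc, one_div_mul_cancel (by positivity), one_mul]
  calc (1 / (T : ℝ)) * ∑ t, f t ≤ (1 / (T : ℝ)) * (∑ t, g t + T * c) := by gcongr
    _ ≤ (1 / (T : ℝ)) * ∑ t, g t + c := by rw [mul_add]; linarith

lemma card_mul_average_eq_sum {α : Type*} (s : Finset α) (f : α → ℝ) :
    (#s : ℝ) * (if 0 < #s then 1 / (#s : ℝ) * ∑ t ∈ s, f t else 0) = ∑ t ∈ s, f t := by
  split_ifs with hs
  · field_simp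
  · simp [Finset.card_eq_zero.1 (Nat.eq_zero_of_not_pos hs)]

lemma sum_card_mul_bucket_average {α κ : Type*} [Fintype α] [Fintype κ] [DecidableEq κ]
    (g : α → κ) (F : κ → α → ℝ) :
    ∑ j, (#{t | g t = j} : ℝ) *
        (if 0 < #{t | g t = j} then 1 / (#{t | g t = j} : ℝ) * ∑ t with g t = j, F j t
          else 0) =
      ∑ t, F (g t) t := by
  simp_rw [card_mul_average_eq_sum]
  rw [← sum_fiberwise univ g fun t => F (g t) t]
  exact sum_congr rfl fun j _ => sum_congr rfl fun t ht => by rw [(mem_filter.1 ht).2]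

theorem recalibration_experts_regret_bound_general
    (T N K : ℕ)
    (y p pF : Fin T → ℝ) (pk : Fin K → Fin T → ℝ) (ι : Fin T → Fin N)
    (hy : ∀ t, y t = 0 ∨ y t = 1)
    (hpF : ∀ t, pF t ∈ Set.Icc ((ι t : ℝ) / N) (((ι t : ℝ) + 1) / N))
    (Ti : Fin N → ℕ) (hTi : ∀ i, Ti i = (univ.filter (fun t => ι t = i)).card)
    (R : Fin N → ℝ)
    (hR : ∀ i, R i =
      if 0 < Ti i then
        (1 / (Ti i : ℝ)) * ∑ t ∈ univ.filter (fun t => ι t = i),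
          ((y t - p t) ^ 2 - (y t - (i : ℝ) / N) ^ 2)
      else 0)
    (Rext : ℝ)
    (hext : ∀ k, (1 / (T : ℝ)) * ∑ t, (y t - pF t) ^ 2 ≤
      (1 / (T : ℝ)) * ∑ t, (y t - pk k t) ^ 2 + Rext) :
    ∀ k, (1 / (T : ℝ)) * ∑ t, (y t - p t) ^ 2 ≤
      (1 / (T : ℝ)) * ∑ t, (y t - pk k t) ^ 2 + Rext +
        ∑ i, ((Ti i : ℝ) / T) * R i + 2 / N := by
  intro k
  have hregret : ∑ i, ((Ti i : ℝ) / T) * R i =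
      (1 / (T : ℝ)) * ∑ t, ((y t - p t) ^ 2 - (y t - (ι t : ℝ) / N) ^ 2) := by
    simp_rw [div_eq_mul_one_div (Ti _ : ℝ), mul_comm _ (1 / (T : ℝ)), mul_assoc, ← mul_sum,
      hR, hTi, sum_card_mul_bucket_average ι fun i t => (y t - p t) ^ 2 - (y t - (i : ℝ) / N) ^ 2]
  have hrounding : (1 / (T : ℝ)) * ∑ t, (y t - (ι t : ℝ) / N) ^ 2 ≤
      (1 / (T : ℝ)) * ∑ t, (y t - pF t) ^ 2 + 2 / N := by
    refine average_le_average_add (by positivity) fun t => ?_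
    have hy1 : y t ≤ 1 := by rcases hy t with h | h <;> simp [h]
    rw [div_eq_mul_one_div 2]
    exact sq_sub_le_sq_sub_add_two_mul hy1 (by positivity) (hpF t).1
      ((hpF t).2.trans_eq (add_div _ _ _))
  rw [hregret, sum_sub_distrib, mul_sub]
  linarith [hext k]

/-- Calibration with advice from `K` experts: the recalibrated predictions have
average squared loss at most that of every expert, plus the external regret of the
aggregating forecaster, plus the weighted per-bucket regrets, plus `2/N`. -/
theorem recalibration_experts_regret_bound
    (T N K : ℕ) (hT : 1 ≤ T) (hN : 1 ≤ N) (hK : 1 ≤ K)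
    (y p pF : Fin T → ℝ) (pk : Fin K → Fin T → ℝ) (ι : Fin T → Fin N)
    (hy : ∀ t, y t = 0 ∨ y t = 1)
    (hp : ∀ t, p t ∈ Set.Icc (0 : ℝ) 1)
    (hpF : ∀ t, pF t ∈ Set.Icc ((ι t : ℝ) / N) (((ι t : ℝ) + 1) / N))
    (hpk : ∀ k t, pk k t ∈ Set.Icc (0 : ℝ) 1)
    (Ti : Fin N → ℕ) (hTi : ∀ i, Ti i = (univ.filter (fun t => ι t = i)).card)
    (R : Fin N → ℝ)
    (hR : ∀ i, R i =
      if 0 < Ti i then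
        (1 / (Ti i : ℝ)) * ∑ t ∈ univ.filter (fun t => ι t = i),
          ((y t - p t) ^ 2 - (y t - (i : ℝ) / N) ^ 2)
      else 0)
    (Rext : ℝ) (hRext : 0 ≤ Rext)
    (hext : ∀ k, (1 / (T : ℝ)) * ∑ t, (y t - pF t) ^ 2 ≤
      (1 / (T : ℝ)) * ∑ t, (y t - pk k t) ^ 2 + Rext) :
    ∀ k, (1 / (T : ℝ)) * ∑ t, (y t - p t) ^ 2 ≤
      (1 / (T : ℝ)) * ∑ t, (y t - pk k t) ^ 2 + Rext +
        ∑ i, ((Ti i : ℝ) / T) * R i + 2 / N :=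
  recalibration_experts_regret_bound_general T N K y p pF pk ι hy hpF Ti hTi R hR Rext hext
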